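/- arXiv:2312.02415 — 3 statements merged into one kernel-verified Lean document; each statement's English description precedes it below -/
import Mathlib

section
/- Let n_r ≥ 2 be even, let l_s, l_d ≥ 0, l^{(s)} > 0, and ζ_1, ζ_2 ∈ ℝ. Let \bar{L} ∈ ℝ^{n_r×n_r} be the matrix with diagonal entries \bar{L}_{ii} = (n_r/2 − 1) l_s + (n_r/2) l_d + l^{(s)}, off-diagonal entries \bar{L}_{ij} = −l_s if i ≠ j lie in the same half ({1,…,n_r/2} or {n_r/2+1,…,n_r}), and \bar{L}_{ij} = −l_d if they lie in different halves. Let v ∈ ℝ^{n_r} have v_i = ζ_1 for i ≤ n_r/2 and v_i = ζ_2 otherwise. Then: (a) \bar{L} is positive definite; (b) the unique solution u of \bar{L} u = v has the block-constant form u_i = x̄_1 for i ≤ n_r/2 and u_i = x̄_2 for i > n_r/2, where x̄_1 + x̄_2 = (ζ_1 + ζ_2)/l^{(s)} and x̄_1 − x̄_2 = (ζ_1 − ζ_2)/(l^{(s)} + n_r l_d); in particular x̄_1 ≠ x̄_2 if and only if ζ_1 ≠ ζ_2. -/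
/-- The grounded Laplacian of the averaged graph of a two-community SBM-S with
`n_r = 2m` regular agents: diagonal entries `(m−1)l_s + m·l_d + l⁽ˢ⁾`, off-diagonal
entries `−l_s` within a half and `−l_d` across the halves. -/
noncomputable def avgGroundedLaplacian (m : ℕ) (ls ld lS : ℝ) :
    Matrix (Fin (2 * m)) (Fin (2 * m)) ℝ :=
  Matrix.of fun i j : Fin (2 * m) =>
    if i = j then ((m : ℝ) - 1) * ls + (m : ℝ) * ld + lS
    else if ((i : ℕ) < m ↔ (j : ℕ) < m) then -ls else -ld

/-!
`L̄ = l⁽ˢ⁾ I + Λ`, where `Λ` is the Laplacian of the complete graph with weight `l_s` inside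
and `l_d` across the two halves. A Laplacian with symmetric nonnegative weights `w` has
quadratic form `½ ∑ᵢⱼ wᵢⱼ (xᵢ - xⱼ)² ≥ 0`, so `L̄` is positive definite and in particular
injective. On block-constant vectors `L̄` reduces to the `2 × 2` system
`l⁽ˢ⁾ x₁ + m l_d (x₁ - x₂) = ζ₁`, `l⁽ˢ⁾ x₂ + m l_d (x₂ - x₁) = ζ₂`, whose sum and difference
give `x̄₁ + x̄₂` and `x̄₁ - x̄₂`; by injectivity this block-constant solution is the only one.
-/

open Matrix Finset

namespace Matrix

variable {ι : Type*} [Fintype ι] [DecidableEq ι]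

def weightedLaplacian (W : Matrix ι ι ℝ) : Matrix ι ι ℝ :=
  diagonal (fun i => ∑ j, W i j) - W

theorem dotProduct_weightedLaplacian_mulVec {W : Matrix ι ι ℝ} (hW : W.IsSymm) (x : ι → ℝ) :
    x ⬝ᵥ (W.weightedLaplacian *ᵥ x) = (∑ i, ∑ j, W i j * (x i - x j) ^ 2) / 2 := by
  have hswap : ∑ i, ∑ j, W i j * x j ^ 2 = ∑ i, ∑ j, W i j * x i ^ 2 := by
    rw [Finset.sum_comm]
    exact Finset.sum_congr rfl fun i _ => Finset.sum_congr rfl fun j _ => by rw [hW.apply i j]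
  have hlhs : x ⬝ᵥ (W.weightedLaplacian *ᵥ x) =
      ∑ i, ∑ j, W i j * x i ^ 2 - ∑ i, ∑ j, W i j * (x i * x j) := by
    rw [weightedLaplacian, sub_mulVec, dotProduct_sub]
    simp only [dotProduct, mulVec_diagonal]
    simp only [mulVec, dotProduct, Finset.mul_sum, Finset.sum_mul]
    congr 1 <;> exact Finset.sum_congr rfl fun i _ => Finset.sum_congr rfl fun j _ => by ring
  have hrhs : ∑ i, ∑ j, W i j * (x i - x j) ^ 2 = ∑ i, ∑ j, W i j * x i ^ 2
      - 2 * ∑ i, ∑ j, W i j * (x i * x j) + ∑ i, ∑ j, W i j * x j ^ 2 := by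
    simp only [Finset.mul_sum, ← Finset.sum_sub_distrib, ← Finset.sum_add_distrib]
    exact Finset.sum_congr rfl fun i _ => Finset.sum_congr rfl fun j _ => by ring
  rw [hlhs, hrhs, hswap]
  ring

theorem posSemidef_weightedLaplacian {W : Matrix ι ι ℝ} (hW : W.IsSymm)
    (hW₀ : ∀ i j, 0 ≤ W i j) : W.weightedLaplacian.PosSemidef := by
  refine .of_dotProduct_mulVec_nonneg
    ((isHermitian_diagonal _).sub (isHermitian_iff_isSymm.mpr hW)) fun x => ?_
  rw [star_trivial, dotProduct_weightedLaplacian_mulVec hW]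
  exact div_nonneg (Finset.sum_nonneg fun i _ => Finset.sum_nonneg fun j _ =>
    mul_nonneg (hW₀ i j) (sq_nonneg _)) zero_le_two

end Matrix

def blockConst {α : Type*} (m : ℕ) (a b : α) : Fin (2 * m) → α :=
  fun i => if (i : ℕ) < m then a else b

theorem sum_blockConst {M : Type*} [AddCommMonoid M] (m : ℕ) (a b : M) :
    ∑ i, blockConst m a b i = m • a + m • b := by
  change ∑ i : Fin (2 * m), (if (i : ℕ) < m then a else b) = _
  rw [Fin.sum_univ_eq_sum_range (fun k => if k < m then a else b), two_mul,
    Finset.sum_range_add, Finset.sum_congr rfl fun k hk => if_pos (Finset.mem_range.mp hk)]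
  simp

theorem blockConst_dotProduct_blockConst (m : ℕ) (a b c d : ℝ) :
    blockConst m a b ⬝ᵥ blockConst m c d = m * (a * c) + m * (b * d) := by
  have hmul : (fun i => blockConst m a b i * blockConst m c d i) =
      blockConst m (a * c) (b * d) := by
    funext i
    simp only [blockConst]
    split_ifs <;> rfl
  rw [dotProduct, hmul, sum_blockConst, nsmul_eq_mul, nsmul_eq_mul]

section TwoCommunities

variable (m : ℕ) (ls ld lS : ℝ)

/-- The diagonal entries `ls` are self-loops; they cancel in `weightedLaplacian`. -/
def communityWeights : Matrix (Fin (2 * m)) (Fin (2 * m)) ℝ :=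
  of fun i j => if ((i : ℕ) < m ↔ (j : ℕ) < m) then ls else ld

theorem communityWeights_isSymm : (communityWeights m ls ld).IsSymm :=
  IsSymm.ext fun i j => by simp only [communityWeights, of_apply, Iff.comm]

theorem communityWeights_row (i : Fin (2 * m)) :
    communityWeights m ls ld i =
      if (i : ℕ) < m then blockConst m ls ld else blockConst m ld ls := by
  funext j
  by_cases hi : (i : ℕ) < m <;> by_cases hj : (j : ℕ) < m <;>
    simp [communityWeights, blockConst, hi, hj]

theorem sum_communityWeights_row (i : Fin (2 * m)) :
    ∑ j, communityWeights m ls ld i j = m * ls + m * ld := by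
  rw [communityWeights_row]
  split_ifs <;> simp only [sum_blockConst, nsmul_eq_mul, add_comm]

theorem communityWeights_mulVec_blockConst (x₁ x₂ : ℝ) :
    communityWeights m ls ld *ᵥ blockConst m x₁ x₂ =
      blockConst m (m * (ls * x₁ + ld * x₂)) (m * (ld * x₁ + ls * x₂)) := by
  funext i
  rw [mulVec, communityWeights_row, blockConst]
  split_ifs <;> simp only [blockConst_dotProduct_blockConst] <;> ring

theorem avgGroundedLaplacian_eq :
    avgGroundedLaplacian m ls ld lS = lS • 1 + (communityWeights m ls ld).weightedLaplacian := by
  ext i j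
  rw [weightedLaplacian, Matrix.add_apply, Matrix.sub_apply, Matrix.smul_apply, diagonal_apply,
    sum_communityWeights_row, one_apply]
  by_cases hij : i = j
  · simp only [avgGroundedLaplacian, communityWeights, hij, of_apply, ↓reduceIte, smul_eq_mul,
      mul_one]
    ring
  · simp only [avgGroundedLaplacian, communityWeights, of_apply, hij, if_false]
    split_ifs <;> simp

theorem posDef_avgGroundedLaplacian (hls : 0 ≤ ls) (hld : 0 ≤ ld) (hlS : 0 < lS) :
    (avgGroundedLaplacian m ls ld lS).PosDef := by
  rw [avgGroundedLaplacian_eq]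
  refine (PosDef.one.smul hlS).add_posSemidef
    (posSemidef_weightedLaplacian (communityWeights_isSymm m ls ld) fun i j => ?_)
  simp only [communityWeights, of_apply]
  split_ifs <;> assumption

theorem avgGroundedLaplacian_mulVec_blockConst (x₁ x₂ : ℝ) :
    avgGroundedLaplacian m ls ld lS *ᵥ blockConst m x₁ x₂ =
      blockConst m (lS * x₁ + m * ld * (x₁ - x₂)) (lS * x₂ + m * ld * (x₂ - x₁)) := by
  rw [avgGroundedLaplacian_eq, add_mulVec, smul_mulVec, one_mulVec, weightedLaplacian,
    sub_mulVec, communityWeights_mulVec_blockConst]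
  funext i
  simp only [Pi.add_apply, Pi.sub_apply, Pi.smul_apply, smul_eq_mul, mulVec_diagonal,
    sum_communityWeights_row, blockConst]
  split_ifs <;> ring

end TwoCommunities

theorem avgGroundedLaplacian_posDef_and_solution_general (m : ℕ)
    (ls ld lS : ℝ) (hls : 0 ≤ ls) (hld : 0 ≤ ld) (hlS : 0 < lS) (ζ₁ ζ₂ : ℝ) :
    (avgGroundedLaplacian m ls ld lS).PosDef ∧
    ∀ u : Fin (2 * m) → ℝ,
      (avgGroundedLaplacian m ls ld lS).mulVec u =
        (fun i : Fin (2 * m) => if (i : ℕ) < m then ζ₁ else ζ₂) →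
      ∃ x₁ x₂ : ℝ,
        (∀ i : Fin (2 * m), u i = if (i : ℕ) < m then x₁ else x₂) ∧
        x₁ + x₂ = (ζ₁ + ζ₂) / lS ∧
        x₁ - x₂ = (ζ₁ - ζ₂) / (lS + (2 * m : ℕ) * ld) ∧
        (x₁ ≠ x₂ ↔ ζ₁ ≠ ζ₂) := by
  have hL := posDef_avgGroundedLaplacian m ls ld lS hls hld hlS
  refine ⟨hL, fun u hu => ?_⟩
  have hden : 0 < lS + ((2 * m : ℕ) : ℝ) * ld := by positivity
  set s := (ζ₁ + ζ₂) / lS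
  set d := (ζ₁ - ζ₂) / (lS + (2 * m : ℕ) * ld)
  have hsol : u = blockConst m ((s + d) / 2) ((s - d) / 2) := by
    apply mulVec_injective_iff_isUnit.mpr hL.isUnit
    rw [hu, avgGroundedLaplacian_mulVec_blockConst]
    change blockConst m ζ₁ ζ₂ = _
    congr 1 <;> simp only [s, d] <;> push_cast <;> field_simp <;> ring
  refine ⟨(s + d) / 2, (s - d) / 2, fun i => congrFun hsol i, by ring, by ring, ?_⟩
  rw [ne_eq, ← sub_eq_zero, show (s + d) / 2 - (s - d) / 2 = d by ring, div_eq_zero_iff,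
    sub_eq_zero, or_iff_left hden.ne']

/-- the averaged grounded Laplacian `L̄` is positive definite, and every
solution `u` of `L̄ u = v`, where `v` equals `ζ₁` on the first half and `ζ₂` on the
second half, is block-constant with values `x̄₁, x̄₂` satisfying
`x̄₁ + x̄₂ = (ζ₁ + ζ₂)/l⁽ˢ⁾` and `x̄₁ − x̄₂ = (ζ₁ − ζ₂)/(l⁽ˢ⁾ + n_r·l_d)`;
in particular `x̄₁ ≠ x̄₂` iff `ζ₁ ≠ ζ₂`. -/
theorem avgGroundedLaplacian_posDef_and_solution (m : ℕ) (hm : 1 ≤ m)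
    (ls ld lS : ℝ) (hls : 0 ≤ ls) (hld : 0 ≤ ld) (hlS : 0 < lS) (ζ₁ ζ₂ : ℝ) :
    (avgGroundedLaplacian m ls ld lS).PosDef ∧
    ∀ u : Fin (2 * m) → ℝ,
      (avgGroundedLaplacian m ls ld lS).mulVec u =
        (fun i : Fin (2 * m) => if (i : ℕ) < m then ζ₁ else ζ₂) →
      ∃ x₁ x₂ : ℝ,
        (∀ i : Fin (2 * m), u i = if (i : ℕ) < m then x₁ else x₂) ∧
        x₁ + x₂ = (ζ₁ + ζ₂) / lS ∧
        x₁ - x₂ = (ζ₁ - ζ₂) / (lS + (2 * m : ℕ) * ld) ∧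
        (x₁ ≠ x₂ ↔ ζ₁ ≠ ζ₂) :=
  avgGroundedLaplacian_posDef_and_solution_general m ls ld lS hls hld hlS ζ₁ ζ₂
end

section
/- Let n ≥ 2 and x : {1,…,n} → ℝ. Suppose the subset S ⊆ {1,…,n} with both S and its complement S^c nonempty minimizes the 2-means cost W(S) among all subsets with both parts nonempty. If μ_S < μ_{S^c}, then x_i ≤ x_j for every i ∈ S and every j ∈ S^c; i.e., an optimal 2-means clustering of points on the real line is linearly separated. -/
/-- The mean of `x` over the subset `T` (0 if `T` is empty, by convention `0/0 = 0`). -/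
noncomputable def clusterMean {n : ℕ} (x : Fin n → ℝ) (T : Finset (Fin n)) : ℝ :=
  (∑ i ∈ T, x i) / (T.card : ℝ)

/-- The 2-means cost of the partition `{S, Sᶜ}`:
`W(S) = ∑_{i∈S} (x_i − μ_S)² + ∑_{i∈Sᶜ} (x_i − μ_{Sᶜ})²`. -/
noncomputable def twoMeansCost {n : ℕ} (x : Fin n → ℝ) (S : Finset (Fin n)) : ℝ :=
  (∑ i ∈ S, (x i - clusterMean x S) ^ 2) + ∑ i ∈ Sᶜ, (x i - clusterMean x Sᶜ) ^ 2

/-!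
Exchanging a point `i ∈ S` with a point `j ∈ Sᶜ` and keeping the old centres `μ_S`, `μ_{Sᶜ}`
changes the cost by `-2 (x_i - x_j) (μ_{Sᶜ} - μ_S)`; re-centring at the new means can only
lower it further. So if `μ_S < μ_{Sᶜ}` and `x_i > x_j`, the exchanged partition is strictly
cheaper, contradicting optimality.
-/

namespace Finset

variable {α M : Type*} [DecidableEq α] [AddCommGroup M]

lemma sum_insert_erase_of_mem_of_notMem {s : Finset α} {i j : α} (hi : i ∈ s) (hj : j ∉ s)
    (f : α → M) : ∑ k ∈ insert j (s.erase i), f k = ∑ k ∈ s, f k - f i + f j := by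
  rw [sum_insert fun h ↦ hj (mem_of_mem_erase h), ← sum_erase_add s f hi]
  abel

lemma compl_insert_erase [Fintype α] {s : Finset α} {i j : α} (hij : i ≠ j) :
    (insert j (s.erase i))ᶜ = insert i (sᶜ.erase j) := by
  rw [compl_insert, compl_erase, erase_insert_of_ne hij]

end Finset

open Finset

section TwoMeans

variable {n : ℕ} (x : Fin n → ℝ)

lemma sum_sq_sub_eq_sum_sq_sub_clusterMean_add (T : Finset (Fin n)) (c : ℝ) :
    ∑ i ∈ T, (x i - c) ^ 2
      = ∑ i ∈ T, (x i - clusterMean x T) ^ 2 + T.card * (clusterMean x T - c) ^ 2 := by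
  set m := clusterMean x T
  have hsum : ∑ i ∈ T, x i = T.card * m := by
    rcases T.eq_empty_or_nonempty with rfl | hT
    · simp
    · have : (T.card : ℝ) ≠ 0 := by positivity
      simp only [m, clusterMean]
      field_simp
  have hpoint : ∀ i ∈ T, (x i - c) ^ 2 = (x i - m) ^ 2 + (2 * (m - c) * x i + (c ^ 2 - m ^ 2)) :=
    fun i _ ↦ by ring
  rw [sum_congr rfl hpoint, sum_add_distrib, sum_add_distrib, ← mul_sum, hsum, sum_const,
    nsmul_eq_mul]
  ring

lemma sum_sq_sub_clusterMean_le (T : Finset (Fin n)) (c : ℝ) :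
    ∑ i ∈ T, (x i - clusterMean x T) ^ 2 ≤ ∑ i ∈ T, (x i - c) ^ 2 := by
  rw [sum_sq_sub_eq_sum_sq_sub_clusterMean_add x T c]
  exact le_add_of_nonneg_right (by positivity)

lemma twoMeansCost_le (S : Finset (Fin n)) (a b : ℝ) :
    twoMeansCost x S ≤ ∑ i ∈ S, (x i - a) ^ 2 + ∑ i ∈ Sᶜ, (x i - b) ^ 2 :=
  add_le_add (sum_sq_sub_clusterMean_le x S a) (sum_sq_sub_clusterMean_le x Sᶜ b)

lemma twoMeansCost_insert_erase_le {S : Finset (Fin n)} {i j : Fin n} (hi : i ∈ S)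
    (hj : j ∉ S) :
    twoMeansCost x (insert j (S.erase i))
      ≤ twoMeansCost x S - 2 * (x i - x j) * (clusterMean x Sᶜ - clusterMean x S) := by
  have hij : i ≠ j := ne_of_mem_of_not_mem hi hj
  calc twoMeansCost x (insert j (S.erase i))
      ≤ ∑ k ∈ insert j (S.erase i), (x k - clusterMean x S) ^ 2
          + ∑ k ∈ (insert j (S.erase i))ᶜ, (x k - clusterMean x Sᶜ) ^ 2 :=
        twoMeansCost_le x _ _ _
    _ = twoMeansCost x S - 2 * (x i - x j) * (clusterMean x Sᶜ - clusterMean x S) := by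
        rw [compl_insert_erase hij, sum_insert_erase_of_mem_of_notMem hi hj,
          sum_insert_erase_of_mem_of_notMem (mem_compl.2 hj) (notMem_compl.2 hi), twoMeansCost]
        ring

end TwoMeans

theorem twoMeans_optimal_separated_general (n : ℕ) (x : Fin n → ℝ)
    (S : Finset (Fin n))
    (hopt : ∀ T : Finset (Fin n), T.Nonempty → Tᶜ.Nonempty →
      twoMeansCost x S ≤ twoMeansCost x T)
    (hmean : clusterMean x S < clusterMean x Sᶜ) :
    ∀ i ∈ S, ∀ j ∈ Sᶜ, x i ≤ x j := by
  intro i hi j hj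
  by_contra! hji
  have hjS : j ∉ S := mem_compl.1 hj
  have hswap_ne : (insert j (S.erase i)).Nonempty := insert_nonempty _ _
  have hswap_compl_ne : (insert j (S.erase i))ᶜ.Nonempty := by
    rw [compl_insert_erase (ne_of_mem_of_not_mem hi hjS)]
    exact insert_nonempty _ _
  have hgain : 0 < 2 * (x i - x j) * (clusterMean x Sᶜ - clusterMean x S) :=
    mul_pos (mul_pos two_pos (sub_pos.2 hji)) (sub_pos.2 hmean)
  have hswap_le := twoMeansCost_insert_erase_le x hi hjS
  have hopt_swap := hopt _ hswap_ne hswap_compl_ne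
  linarith

/-- an optimal 2-means clustering of points on the real line is linearly
separated: if `S` (with `S` and `Sᶜ` nonempty) minimizes the 2-means cost among all such
subsets and `μ_S < μ_{Sᶜ}`, then `x_i ≤ x_j` for every `i ∈ S` and `j ∈ Sᶜ`. -/
theorem twoMeans_optimal_separated (n : ℕ) (hn : 2 ≤ n) (x : Fin n → ℝ)
    (S : Finset (Fin n)) (hS : S.Nonempty) (hSc : Sᶜ.Nonempty)
    (hopt : ∀ T : Finset (Fin n), T.Nonempty → Tᶜ.Nonempty →
      twoMeansCost x S ≤ twoMeansCost x T)
    (hmean : clusterMean x S < clusterMean x Sᶜ) :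
    ∀ i ∈ S, ∀ j ∈ Sᶜ, x i ≤ x j :=
  twoMeans_optimal_separated_general n x S hopt hmean
end

section
/- Let n ≥ 2, x : {1,…,n} → ℝ, and let {G_1, G_2} be a partition of {1,…,n} into two nonempty sets. Suppose there exist real numbers m_1 < m_2 and ε > 0 such that |x_i − m_1| ≤ ε for all i ∈ G_1, |x_i − m_2| ≤ ε for all i ∈ G_2, m_2 − m_1 > 2ε, and (m_2 − m_1 − 2ε)² > 8 n ε². Then every subset S ⊆ {1,…,n} minimizing the 2-means cost W(S) among all subsets satisfies {S, S^c} = {G_1, G_2}; i.e., optimal 2-means clustering exactly recovers the two groups. -/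
lemma mean_sq_le {n : ℕ} (x : Fin n → ℝ) (T : Finset (Fin n)) (m : ℝ) :
    ∑ i ∈ T, (x i - clusterMean x T) ^ 2 ≤ ∑ i ∈ T, (x i - m) ^ 2 := by
  rcases T.eq_empty_or_nonempty with rfl | hT
  · simp
  · have hc : (T.card : ℝ) ≠ 0 := Nat.cast_ne_zero.2 (Finset.card_ne_zero.2 hT)
    set μ := clusterMean x T with hμ
    have hsum : ∑ i ∈ T, x i = (T.card : ℝ) * μ := by
      rw [hμ, clusterMean]; field_simp
    have key : ∑ i ∈ T, (x i - m)^2 - ∑ i ∈ T, (x i - μ)^2 = (T.card : ℝ) * (μ - m)^2 := by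
      have h1 : ∀ i ∈ T, (x i - m)^2 - (x i - μ)^2 = 2*(μ-m)*x i + (m^2 - μ^2) :=
        fun i _ => by ring
      rw [← Finset.sum_sub_distrib, Finset.sum_congr rfl h1, Finset.sum_add_distrib,
        ← Finset.mul_sum, hsum, Finset.sum_const, nsmul_eq_mul]
      ring
    have hpos : (0:ℝ) ≤ (T.card : ℝ) * (μ - m)^2 := by positivity
    linarith

lemma pair_lb {n : ℕ} (x : Fin n → ℝ) (T : Finset (Fin n)) {a b : Fin n}
    (ha : a ∈ T) (hb : b ∈ T) (hab : a ≠ b) (μ : ℝ) :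
    (x a - x b)^2 / 2 ≤ ∑ i ∈ T, (x i - μ)^2 := by
  have hsub : ({a, b} : Finset (Fin n)) ⊆ T := by
    intro i hi
    simp only [Finset.mem_insert, Finset.mem_singleton] at hi
    rcases hi with rfl | rfl <;> assumption
  have h := Finset.sum_le_sum_of_subset_of_nonneg hsub (fun i _ _ => sq_nonneg (x i - μ))
  rw [Finset.sum_pair hab] at h
  nlinarith [sq_nonneg (x a + x b - 2*μ)]

/-- if the points of `x` concentrate within `ε` of two well-separated
values `m₁ < m₂` on the two groups `G₁, G₂` of a partition, with `m₂ − m₁ > 2ε` and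
`(m₂ − m₁ − 2ε)² > 8nε²`, then every minimizer of the 2-means cost among all subsets
recovers exactly the partition `{G₁, G₂}`. -/
theorem twoMeans_exact_recovery (n : ℕ) (hn : 2 ≤ n) (x : Fin n → ℝ)
    (G₁ G₂ : Finset (Fin n)) (hG₁ : G₁.Nonempty) (hG₂ : G₂.Nonempty)
    (hdisj : Disjoint G₁ G₂) (hcover : G₁ ∪ G₂ = Finset.univ)
    (m₁ m₂ ε : ℝ) (hm : m₁ < m₂) (hε : 0 < ε)
    (hconc₁ : ∀ i ∈ G₁, |x i - m₁| ≤ ε) (hconc₂ : ∀ i ∈ G₂, |x i - m₂| ≤ ε)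
    (hsep : 2 * ε < m₂ - m₁)
    (hgap : 8 * (n : ℝ) * ε ^ 2 < (m₂ - m₁ - 2 * ε) ^ 2) :
    ∀ S : Finset (Fin n),
      (∀ T : Finset (Fin n), twoMeansCost x S ≤ twoMeansCost x T) →
      (S = G₁ ∧ Sᶜ = G₂) ∨ (S = G₂ ∧ Sᶜ = G₁) := by
  intro S hmin
  -- complements
  have hcompl : G₁ᶜ = G₂ := by
    ext i
    simp only [Finset.mem_compl]
    constructor
    · intro hi
      have hiu : i ∈ G₁ ∪ G₂ := by rw [hcover]; exact Finset.mem_univ i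
      rcases Finset.mem_union.1 hiu with h | h
      · exact absurd h hi
      · exact h
    · intro hi
      exact fun h => (Finset.disjoint_left.1 hdisj) h hi
  -- upper bound on cost of G₁
  have hcard : (G₁.card : ℝ) + G₂.card = n := by
    have h := Finset.card_union_of_disjoint hdisj
    rw [hcover, Finset.card_univ, Fintype.card_fin] at h
    exact_mod_cast h.symm
  have hb1 : ∑ i ∈ G₁, (x i - clusterMean x G₁)^2 ≤ (G₁.card : ℝ) * ε^2 := by
    calc ∑ i ∈ G₁, (x i - clusterMean x G₁)^2 ≤ ∑ i ∈ G₁, (x i - m₁)^2 :=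
          mean_sq_le x G₁ m₁
      _ ≤ ∑ _i ∈ G₁, ε^2 := Finset.sum_le_sum (fun i hi => by
          have h := abs_le.1 (hconc₁ i hi); nlinarith)
      _ = (G₁.card : ℝ) * ε^2 := by rw [Finset.sum_const, nsmul_eq_mul]
  have hb2 : ∑ i ∈ G₂, (x i - clusterMean x G₂)^2 ≤ (G₂.card : ℝ) * ε^2 := by
    calc ∑ i ∈ G₂, (x i - clusterMean x G₂)^2 ≤ ∑ i ∈ G₂, (x i - m₂)^2 :=
          mean_sq_le x G₂ m₂
      _ ≤ ∑ _i ∈ G₂, ε^2 := Finset.sum_le_sum (fun i hi => by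
          have h := abs_le.1 (hconc₂ i hi); nlinarith)
      _ = (G₂.card : ℝ) * ε^2 := by rw [Finset.sum_const, nsmul_eq_mul]
  have hub : twoMeansCost x G₁ ≤ (n : ℝ) * ε^2 := by
    have hsum : (G₁.card : ℝ) * ε^2 + (G₂.card : ℝ) * ε^2 = (n : ℝ) * ε^2 := by
      rw [← hcard]; ring
    unfold twoMeansCost
    rw [hcompl]
    linarith
  by_contra hcon
  have hS1 : S ≠ G₁ := fun h => hcon (Or.inl ⟨h, by rw [h, hcompl]⟩)
  have hS2 : S ≠ G₂ := fun h => hcon (Or.inr ⟨h, by rw [h, ← hcompl, compl_compl]⟩)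
  -- find a mixed cluster
  have hmix : ∃ a b : Fin n, a ∈ G₁ ∧ b ∈ G₂ ∧
      ((a ∈ S ∧ b ∈ S) ∨ (a ∈ Sᶜ ∧ b ∈ Sᶜ)) := by
    by_cases hA : (S ∩ G₁).Nonempty
    · by_cases hB : (S ∩ G₂).Nonempty
      · obtain ⟨a, ha⟩ := hA
        obtain ⟨b, hb⟩ := hB
        rw [Finset.mem_inter] at ha hb
        exact ⟨a, b, ha.2, hb.2, Or.inl ⟨ha.1, hb.1⟩⟩
      · -- S ∩ G₂ = ∅, so S ⊆ G₁; since S ≠ G₁, some a ∈ G₁ \ S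
        have hSG2 : ∀ i ∈ S, i ∉ G₂ := by
          intro i hi hig
          exact hB ⟨i, Finset.mem_inter.2 ⟨hi, hig⟩⟩
        have hSsub : S ⊆ G₁ := by
          intro i hi
          have hiu : i ∈ G₁ ∪ G₂ := by rw [hcover]; exact Finset.mem_univ i
          rcases Finset.mem_union.1 hiu with h | h
          · exact h
          · exact absurd h (hSG2 i hi)
        obtain ⟨a, haG, haS⟩ := Finset.exists_of_ssubset (hSsub.ssubset_of_ne hS1)
        obtain ⟨b, hbG⟩ := hG₂
        exact ⟨a, b, haG, hbG, Or.inr ⟨Finset.mem_compl.2 haS,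
          Finset.mem_compl.2 (fun h => hSG2 b h hbG)⟩⟩
    · -- S ∩ G₁ = ∅, so S ⊆ G₂; since S ≠ G₂, some b ∈ G₂ \ S
      have hSG1 : ∀ i ∈ S, i ∉ G₁ := by
        intro i hi hig
        exact hA ⟨i, Finset.mem_inter.2 ⟨hi, hig⟩⟩
      have hSsub : S ⊆ G₂ := by
        intro i hi
        have hiu : i ∈ G₁ ∪ G₂ := by rw [hcover]; exact Finset.mem_univ i
        rcases Finset.mem_union.1 hiu with h | h
        · exact absurd h (hSG1 i hi)
        · exact h
      obtain ⟨b, hbG, hbS⟩ := Finset.exists_of_ssubset (hSsub.ssubset_of_ne hS2)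
      obtain ⟨a, haG⟩ := hG₁
      exact ⟨a, b, haG, hbG, Or.inr ⟨Finset.mem_compl.2 (fun h => hSG1 a h haG),
        Finset.mem_compl.2 hbS⟩⟩
  obtain ⟨a, b, haG, hbG, hcase⟩ := hmix
  have hab : a ≠ b := fun h => (Finset.disjoint_left.1 hdisj) haG (h ▸ hbG)
  -- separation of values
  have hxa := abs_le.1 (hconc₁ a haG)
  have hxb := abs_le.1 (hconc₂ b hbG)
  set d : ℝ := m₂ - m₁ - 2 * ε with hd
  clear_value d
  have hdpos : 0 < d := by simp only [hd]; linarith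
  have hsep2 : d^2 ≤ (x a - x b)^2 := by nlinarith
  -- lower bound on cost of S
  have hlb : d^2 / 2 ≤ twoMeansCost x S := by
    unfold twoMeansCost
    rcases hcase with ⟨haS, hbS⟩ | ⟨haS, hbS⟩
    · have h := pair_lb x S haS hbS hab (clusterMean x S)
      have h2 : (0:ℝ) ≤ ∑ i ∈ Sᶜ, (x i - clusterMean x Sᶜ) ^ 2 :=
        Finset.sum_nonneg (fun i _ => sq_nonneg _)
      have h3 : d ^ 2 / 2 ≤ (x a - x b) ^ 2 / 2 := by linarith
      exact le_trans h3 (le_trans h (le_add_of_nonneg_right h2))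
    · have h := pair_lb x Sᶜ haS hbS hab (clusterMean x Sᶜ)
      have h2 : (0:ℝ) ≤ ∑ i ∈ S, (x i - clusterMean x S) ^ 2 :=
        Finset.sum_nonneg (fun i _ => sq_nonneg _)
      have h3 : d ^ 2 / 2 ≤ (x a - x b) ^ 2 / 2 := by linarith
      exact le_trans h3 (le_trans h (le_add_of_nonneg_left h2))
  have hminG := hmin G₁
  have hnpos : (2:ℝ) ≤ (n : ℝ) := by exact_mod_cast hn
  nlinarith [sq_nonneg ε]
end
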